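/- Each second-level discrete-spline wavelet packet ψ_{[2],ρ} of order 2r has norm one, for each ρ ∈ {0,1,2,3} the four-sample shifts {ψ_{[2],ρ}[·−4l] : l = 0,…,N/4−1} are mutually orthogonal, and shifts of wavelet packets with different indices ρ ≠ ρ′ are orthogonal to each other; i.e. ⟨ψ_{[2],ρ}[·−4l], ψ_{[2],ρ′}[·−4p]⟩ = δ[ρ−ρ′]·δ[l−p]. -/

import Mathlib

open Finset

noncomputable def omegaN (N : ℕ) : ℂ := Complex.exp (2 * Real.pi * Complex.I / N)

noncomputable def U4r (N r : ℕ) (n : ℤ) : ℝ :=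
  ((Real.cos (Real.pi * n / N)) ^ (4 * r) + (Real.sin (Real.pi * n / N)) ^ (4 * r)) / 2

noncomputable def betaF (N r : ℕ) (n : ℤ) : ℂ :=
  Complex.ofReal ((Real.cos (Real.pi * n / N)) ^ (2 * r) / Real.sqrt (U4r N r n))

noncomputable def alphaF (N r : ℕ) (n : ℤ) : ℂ :=
  omegaN N ^ n * Complex.ofReal ((Real.sin (Real.pi * n / N)) ^ (2 * r) / Real.sqrt (U4r N r n))

noncomputable def psi0 (N r : ℕ) (k : ℤ) : ℂ :=
  (N : ℂ)⁻¹ * ∑ n ∈ Finset.range N, omegaN N ^ (k * (n : ℤ)) * betaF N r n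

noncomputable def psi1 (N r : ℕ) (k : ℤ) : ℂ :=
  (N : ℂ)⁻¹ * ∑ n ∈ Finset.range N, omegaN N ^ (k * (n : ℤ)) * alphaF N r n

noncomputable def ip (N : ℕ) (x y : ℤ → ℂ) : ℂ :=
  ∑ k ∈ Finset.range N, x k * (starRingEnd ℂ) (y k)

/-- DFTs of the second-level discrete-spline wavelet packets:
ψ̂₂,₀[n]=β[n]β[2n], ψ̂₂,₁[n]=β[n]α[2n], ψ̂₂,₂[n]=α[n]α[2n], ψ̂₂,₃[n]=α[n]β[2n]. -/
noncomputable def psi2hat (N r : ℕ) (ρ : Fin 4) (n : ℤ) : ℂ :=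
  if ρ.val = 0 then betaF N r n * betaF N r (2 * n)
  else if ρ.val = 1 then betaF N r n * alphaF N r (2 * n)
  else if ρ.val = 2 then alphaF N r n * alphaF N r (2 * n)
  else alphaF N r n * betaF N r (2 * n)

noncomputable def psi2 (N r : ℕ) (ρ : Fin 4) (k : ℤ) : ℂ :=
  (N : ℂ)⁻¹ * ∑ n ∈ Finset.range N, omegaN N ^ (k * (n : ℤ)) * psi2hat N r ρ n

/-!
By Parseval, the inner product of the two shifted packets is
`N⁻¹ ∑ₙ ω^(4(p-l)n) ψ̂_ρ[n] conj ψ̂_ρ'[n]`. Writing `n = s + tM` with `N = 4M` and `t < 4`, the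
phase depends only on `s`, and the sum over `t` equals `4 δ[ρ-ρ']`. This is because
`(β, α)` is a paraunitary pair: with `x = cos^(2r)/√U` and `y = sin^(2r)/√U` one has
`x² + y² = 2`, and the half-period shift `n ↦ n + N/2` swaps `x` and `y` and negates `ωⁿ`.
The remaining sum over `s` is a geometric sum of the primitive `M`-th root of unity `ω⁴`.
-/

theorem IsPrimitiveRoot.sum_range_zpow_mul {K : Type*} [Field K] {ζ : K} {N : ℕ}
    (hζ : IsPrimitiveRoot ζ N) (d : ℤ) :
    ∑ k ∈ range N, ζ ^ ((k : ℤ) * d) = if (N : ℤ) ∣ d then (N : K) else 0 := by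
  have hpow : ∀ k : ℕ, ζ ^ ((k : ℤ) * d) = (ζ ^ d) ^ k := fun k => by
    rw [mul_comm, zpow_mul, zpow_natCast]
  simp_rw [hpow]
  split_ifs with hd
  · simp [(hζ.zpow_eq_one_iff_dvd d).2 hd]
  · have hne : ζ ^ d ≠ 1 := mt (hζ.zpow_eq_one_iff_dvd d).1 hd
    rw [geom_sum_eq hne, ← zpow_natCast, ← zpow_mul, mul_comm, zpow_mul, hζ.zpow_eq_one,
      one_zpow, sub_self, zero_div]

theorem Finset.sum_range_mul_eq_sum_sum {M : Type*} [AddCommMonoid M] (f : ℕ → M) (m k : ℕ) :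
    ∑ n ∈ range (k * m), f n = ∑ s ∈ range m, ∑ t ∈ range k, f (s + t * m) := by
  induction k with
  | zero => simp
  | succ k ih =>
    simp_rw [sum_range_succ (fun t => f (_ + t * m)), sum_add_distrib, ← ih, add_mul, one_mul,
      sum_range_add, add_comm]

lemma omegaN_isPrimitiveRoot {N : ℕ} (hN : N ≠ 0) : IsPrimitiveRoot (omegaN N) N :=
  Complex.isPrimitiveRoot_exp N hN

lemma omegaN_ne_zero (N : ℕ) : omegaN N ≠ 0 := Complex.exp_ne_zero _

lemma conj_omegaN_zpow (N : ℕ) (d : ℤ) : starRingEnd ℂ (omegaN N ^ d) = omegaN N ^ (-d) := by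
  rw [map_zpow₀, omegaN, ← Complex.exp_conj, zpow_neg, ← Complex.exp_int_mul, ← Complex.exp_int_mul,
    ← Complex.exp_neg]
  congr 1
  simp only [map_div₀, map_mul, Complex.conj_I, Complex.conj_ofReal, map_ofNat,
    Complex.conj_natCast]
  ring

noncomputable def idft (N : ℕ) (X : ℤ → ℂ) (k : ℤ) : ℂ :=
  (N : ℂ)⁻¹ * ∑ n ∈ range N, omegaN N ^ (k * (n : ℤ)) * X n

lemma sum_range_omegaN_zpow_mul_sub {N n m : ℕ} (hn : n < N) (hm : m < N) :
    ∑ k ∈ range N, omegaN N ^ ((k : ℤ) * (n - m)) = if n = m then (N : ℂ) else 0 := by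
  rw [(omegaN_isPrimitiveRoot (by omega)).sum_range_zpow_mul]
  congr 1
  refine propext ⟨fun h => ?_, fun h => by simp [h]⟩
  have := Int.eq_zero_of_abs_lt_dvd h (by rw [abs_lt]; omega)
  omega

theorem ip_idft_shift (N : ℕ) (X Y : ℤ → ℂ) (a b : ℤ) :
    ip N (fun k => idft N X (k - a)) (fun k => idft N Y (k - b)) =
      (N : ℂ)⁻¹ * ∑ n ∈ range N, omegaN N ^ ((b - a) * n) * (X n * starRingEnd ℂ (Y n)) := by
  have hω := omegaN_ne_zero N
  calc ip N (fun k => idft N X (k - a)) (fun k => idft N Y (k - b))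
      = ∑ m ∈ range N, ∑ n ∈ range N, ((N : ℂ)⁻¹ * (N : ℂ)⁻¹ *
          (omegaN N ^ (b * m - a * n) * X n * starRingEnd ℂ (Y m))) *
          ∑ k ∈ range N, omegaN N ^ ((k : ℤ) * (n - m)) := by
        simp only [ip, idft, map_mul, map_sum, map_inv₀, map_natCast, conj_omegaN_zpow, sum_mul,
          mul_sum]
        conv_lhs => rw [sum_comm]
        refine sum_congr rfl fun m _ => ?_
        rw [sum_comm]
        refine sum_congr rfl fun n _ => sum_congr rfl fun k _ => ?_
        have : omegaN N ^ ((k - a) * n) * omegaN N ^ (-((k - b) * m)) =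
            omegaN N ^ (b * m - a * n) * omegaN N ^ ((k : ℤ) * (n - m)) := by
          rw [← zpow_add₀ hω, ← zpow_add₀ hω]; ring_nf
        linear_combination (N : ℂ)⁻¹ * (N : ℂ)⁻¹ * X n * starRingEnd ℂ (Y m) * this
    _ = _ := by
        rw [mul_sum]
        refine sum_congr rfl fun m hm => ?_
        rw [sum_congr rfl fun n hn => by
          rw [sum_range_omegaN_zpow_mul_sub (mem_range.1 hn) (mem_range.1 hm)]]
        simp only [mul_ite, mul_zero, sum_ite_eq', if_pos hm]
        have hN : (N : ℂ) ≠ 0 := Nat.cast_ne_zero.2 (by simp at hm; omega)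
        field_simp
        ring_nf

noncomputable def cosAmp (N r : ℕ) (n : ℤ) : ℝ :=
  Real.cos (Real.pi * n / N) ^ (2 * r) / Real.sqrt (U4r N r n)

noncomputable def sinAmp (N r : ℕ) (n : ℤ) : ℝ :=
  Real.sin (Real.pi * n / N) ^ (2 * r) / Real.sqrt (U4r N r n)

lemma betaF_eq (N r : ℕ) (n : ℤ) : betaF N r n = cosAmp N r n := rfl

lemma alphaF_eq (N r : ℕ) (n : ℤ) : alphaF N r n = omegaN N ^ n * sinAmp N r n := rfl

lemma U4r_pos (N r : ℕ) (n : ℤ) : 0 < U4r N r n := by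
  unfold U4r
  have hsc := Real.sin_sq_add_cos_sq (Real.pi * n / N)
  simp only [show 4 * r = 2 * (2 * r) by ring, pow_mul]
  rcases eq_or_ne (Real.cos (Real.pi * n / N)) 0 with hc | hc
  · have hs : Real.sin (Real.pi * n / N) ^ 2 = 1 := by rw [hc] at hsc; linarith
    rw [hs]
    positivity
  · have := pow_pos (pow_pos (sq_pos_of_ne_zero hc) 2) r
    positivity

lemma cosAmp_sq_add_sinAmp_sq (N r : ℕ) (n : ℤ) : cosAmp N r n ^ 2 + sinAmp N r n ^ 2 = 2 := by
  have hU := U4r_pos N r n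
  rw [cosAmp, sinAmp, div_pow, div_pow, Real.sq_sqrt hU.le, ← add_div, div_eq_iff hU.ne']
  unfold U4r
  ring

lemma angle_add_half {N h : ℕ} (hN : N = 2 * h) (hh : h ≠ 0) (n : ℤ) :
    Real.pi * ((n + h : ℤ) : ℝ) / N = Real.pi * n / N + Real.pi / 2 := by
  subst hN
  push_cast
  field_simp

lemma angle_add_period {N : ℕ} (hN : N ≠ 0) (n : ℤ) :
    Real.pi * ((n + N : ℤ) : ℝ) / N = Real.pi * n / N + Real.pi := by
  push_cast
  field_simp

lemma U4r_add_half {N h : ℕ} (hN : N = 2 * h) (hh : h ≠ 0) (r : ℕ) (n : ℤ) :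
    U4r N r (n + h) = U4r N r n := by
  rw [U4r, U4r, angle_add_half hN hh, Real.cos_add_pi_div_two, Real.sin_add_pi_div_two,
    Even.neg_pow ⟨2 * r, by ring⟩, add_comm]

lemma U4r_add_period {N : ℕ} (hN : N ≠ 0) (r : ℕ) (n : ℤ) : U4r N r (n + N) = U4r N r n := by
  rw [U4r, U4r, angle_add_period hN, Real.cos_add_pi, Real.sin_add_pi,
    Even.neg_pow ⟨2 * r, by ring⟩, Even.neg_pow ⟨2 * r, by ring⟩]

lemma cosAmp_add_half {N h : ℕ} (hN : N = 2 * h) (hh : h ≠ 0) (r : ℕ) (n : ℤ) :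
    cosAmp N r (n + h) = sinAmp N r n := by
  rw [cosAmp, sinAmp, U4r_add_half hN hh, angle_add_half hN hh, Real.cos_add_pi_div_two,
    Even.neg_pow ⟨r, by ring⟩]

lemma sinAmp_add_half {N h : ℕ} (hN : N = 2 * h) (hh : h ≠ 0) (r : ℕ) (n : ℤ) :
    sinAmp N r (n + h) = cosAmp N r n := by
  rw [cosAmp, sinAmp, U4r_add_half hN hh, angle_add_half hN hh, Real.sin_add_pi_div_two]

lemma cosAmp_add_period {N : ℕ} (hN : N ≠ 0) (r : ℕ) (n : ℤ) :
    cosAmp N r (n + N) = cosAmp N r n := by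
  rw [cosAmp, cosAmp, U4r_add_period hN, angle_add_period hN, Real.cos_add_pi,
    Even.neg_pow ⟨r, by ring⟩]

lemma sinAmp_add_period {N : ℕ} (hN : N ≠ 0) (r : ℕ) (n : ℤ) :
    sinAmp N r (n + N) = sinAmp N r n := by
  rw [sinAmp, sinAmp, U4r_add_period hN, angle_add_period hN, Real.sin_add_pi,
    Even.neg_pow ⟨r, by ring⟩]

lemma omegaN_zpow_add_half {N h : ℕ} (hN : N = 2 * h) (hh : h ≠ 0) (n : ℤ) :
    omegaN N ^ (n + h) = -omegaN N ^ n := by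
  have hω := omegaN_isPrimitiveRoot (N := N) (by omega)
  have hhalf : omegaN N ^ h = -1 := by
    refine IsPrimitiveRoot.eq_neg_one_of_two_right ?_
    simpa [hN, hh] using hω.pow_of_dvd hh (hN ▸ dvd_mul_left h 2)
  rw [zpow_add₀ (hω.ne_zero (by omega)), zpow_natCast, hhalf, mul_neg_one]

lemma omegaN_zpow_add_period {N : ℕ} (hN : N ≠ 0) (n : ℤ) :
    omegaN N ^ (n + N) = omegaN N ^ n := by
  have hω := omegaN_isPrimitiveRoot hN
  rw [zpow_add₀ (hω.ne_zero hN), zpow_natCast, hω.pow_eq_one, mul_one]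

noncomputable def filterPair (N r : ℕ) : Fin 2 → ℤ → ℂ := ![betaF N r, alphaF N r]

lemma filterPair_add_period {N : ℕ} (hN : N ≠ 0) (r : ℕ) (i : Fin 2) (n : ℤ) :
    filterPair N r i (n + N) = filterPair N r i n := by
  fin_cases i <;>
    simp [filterPair, betaF_eq, alphaF_eq, cosAmp_add_period hN, sinAmp_add_period hN,
      omegaN_zpow_add_period hN]

lemma filterPair_orthogonal {N h : ℕ} (hN : N = 2 * h) (hh : h ≠ 0) (r : ℕ) (i k : Fin 2)
    (n : ℤ) :
    filterPair N r i n * starRingEnd ℂ (filterPair N r k n) +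
        filterPair N r i (n + h) * starRingEnd ℂ (filterPair N r k (n + h)) =
      if i = k then 2 else 0 := by
  have hsq : (cosAmp N r n : ℂ) ^ 2 + (sinAmp N r n : ℂ) ^ 2 = 2 := by
    exact_mod_cast cosAmp_sq_add_sinAmp_sq N r n
  have hunit : omegaN N ^ n * starRingEnd ℂ (omegaN N) ^ n = 1 := by
    rw [← map_zpow₀, conj_omegaN_zpow, ← zpow_add₀ (omegaN_ne_zero N), add_neg_cancel, zpow_zero]
  fin_cases i <;> fin_cases k <;>
    simp [filterPair, betaF_eq, alphaF_eq, cosAmp_add_half hN hh, sinAmp_add_half hN hh,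
      omegaN_zpow_add_half hN hh]
  · linear_combination hsq
  · ring
  · ring
  · linear_combination ((cosAmp N r n : ℂ) ^ 2 + (sinAmp N r n : ℂ) ^ 2) * hunit + hsq

/-- The dilated factor `F i (2 * ·)` has period `2 * M`, so the four terms pair up into two
instances of `horth` for the undilated factor. -/
theorem sum_range_four_prod_dilate_orthogonal {ι : Type*} [DecidableEq ι] (F : ι → ℤ → ℂ)
    (M : ℤ) (hper : ∀ i m, F i (m + 4 * M) = F i m)
    (horth : ∀ i k m, F i m * starRingEnd ℂ (F k m) + F i (m + 2 * M) *
      starRingEnd ℂ (F k (m + 2 * M)) = if i = k then 2 else 0)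
    (a b : ι × ι) (n : ℤ) :
    ∑ t ∈ range 4, F a.1 (n + t * M) * F a.2 (2 * (n + t * M)) *
        starRingEnd ℂ (F b.1 (n + t * M) * F b.2 (2 * (n + t * M))) =
      if a = b then 4 else 0 := by
  have hprod : (if a.1 = b.1 then (2 : ℂ) else 0) * (if a.2 = b.2 then 2 else 0) =
      if a = b then 4 else 0 := by
    obtain ⟨a₁, a₂⟩ := a
    obtain ⟨b₁, b₂⟩ := b
    by_cases h₁ : a₁ = b₁ <;> by_cases h₂ : a₂ = b₂ <;> simp [h₁, h₂]
    norm_num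
  refine Eq.trans ?_ hprod
  simp only [sum_range_succ, sum_range_zero, Nat.cast_ofNat, Nat.cast_one, Nat.cast_zero, zero_add,
    zero_mul, add_zero, one_mul, map_mul]
  rw [show 2 * (n + M) = 2 * n + 2 * M by ring, show 2 * (n + 2 * M) = 2 * n + 4 * M by ring,
    show 2 * (n + 3 * M) = 2 * n + 2 * M + 4 * M by ring, show n + 3 * M = n + M + 2 * M by ring,
    hper, hper, hper, hper]
  linear_combination (F a.2 (2 * n) * starRingEnd ℂ (F b.2 (2 * n))) * horth a.1 b.1 n +
    (F a.2 (2 * n + 2 * M) * starRingEnd ℂ (F b.2 (2 * n + 2 * M))) * horth a.1 b.1 (n + M) +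
    (if a.1 = b.1 then (2 : ℂ) else 0) * horth a.2 b.2 (2 * n)

def packetCode : Fin 4 → Fin 2 × Fin 2 := ![(0, 0), (0, 1), (1, 1), (1, 0)]

lemma packetCode_injective : Function.Injective packetCode := by decide

lemma psi2hat_eq (N r : ℕ) (ρ : Fin 4) (n : ℤ) :
    psi2hat N r ρ n =
      filterPair N r (packetCode ρ).1 n * filterPair N r (packetCode ρ).2 (2 * n) := by
  fin_cases ρ <;> rfl

lemma sum_range_four_psi2hat_mul_conj {N M : ℕ} (hNM : N = 4 * M) (hM : M ≠ 0) (r : ℕ)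
    (ρ ρ' : Fin 4) (n : ℤ) :
    ∑ t ∈ range 4, psi2hat N r ρ (n + t * M) * starRingEnd ℂ (psi2hat N r ρ' (n + t * M)) =
      if ρ = ρ' then 4 else 0 := by
  subst hNM
  have hper (i : Fin 2) (m : ℤ) : filterPair (4 * M) r i (m + 4 * M) = filterPair (4 * M) r i m :=
    mod_cast filterPair_add_period (by omega) r i m
  have horth (i k : Fin 2) (m : ℤ) :=
    filterPair_orthogonal (N := 4 * M) (h := 2 * M) (by ring) (by omega) r i k m
  push_cast at horth
  simp only [psi2hat_eq, sum_range_four_prod_dilate_orthogonal (filterPair (4 * M) r) M hper horth,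
    packetCode_injective.eq_iff]

theorem ip_psi2_shift {N M : ℕ} (hNM : N = 4 * M) (hM : M ≠ 0) (r : ℕ) (ρ ρ' : Fin 4) (l p : ℤ) :
    ip N (fun k => psi2 N r ρ (k - 4 * l)) (fun k => psi2 N r ρ' (k - 4 * p)) =
      if ρ = ρ' ∧ (M : ℤ) ∣ p - l then 1 else 0 := by
  have hω := omegaN_isPrimitiveRoot (N := N) (by omega)
  have hω4 : IsPrimitiveRoot (omegaN N ^ 4) M := by
    simpa [hNM] using hω.pow_of_dvd (p := 4) (by norm_num) (hNM ▸ dvd_mul_right 4 M)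
  have hphase (s t : ℕ) : omegaN N ^ ((4 * p - 4 * l) * ((s + t * M : ℕ) : ℤ)) =
      (omegaN N ^ 4) ^ ((s : ℤ) * (p - l)) := by
    rw [show (4 * p - 4 * l) * ((s + t * M : ℕ) : ℤ) = 4 * (s * (p - l)) + N * (t * (p - l)) by
        rw [hNM]; push_cast; ring,
      zpow_add₀ (omegaN_ne_zero N), zpow_mul _ (N : ℤ), zpow_natCast _ N, hω.pow_eq_one, one_zpow,
      mul_one, zpow_mul, zpow_ofNat]
  calc ip N (fun k => psi2 N r ρ (k - 4 * l)) (fun k => psi2 N r ρ' (k - 4 * p))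
      = (N : ℂ)⁻¹ * ∑ n ∈ range N, omegaN N ^ ((4 * p - 4 * l) * n) *
          (psi2hat N r ρ n * starRingEnd ℂ (psi2hat N r ρ' n)) :=
        ip_idft_shift N _ _ _ _
    _ = (N : ℂ)⁻¹ * ∑ s ∈ range M, (omegaN N ^ 4) ^ ((s : ℤ) * (p - l)) * ∑ t ∈ range 4,
          psi2hat N r ρ (s + t * M) * starRingEnd ℂ (psi2hat N r ρ' (s + t * M)) := by
        rw [hNM, sum_range_mul_eq_sum_sum, ← hNM]
        simp_rw [hphase, mul_sum, Nat.cast_add, Nat.cast_mul]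
    _ = (N : ℂ)⁻¹ * ((if ρ = ρ' then 4 else 0) * (if (M : ℤ) ∣ p - l then (M : ℂ) else 0)) := by
        simp_rw [sum_range_four_psi2hat_mul_conj hNM hM, ← sum_mul, hω4.sum_range_zpow_mul]
        ring
    _ = _ := by
        subst hNM
        split_ifs <;> simp_all
        field_simp

theorem stmt_3_general (j r : ℕ) (hj : 3 ≤ j) (N : ℕ) (hN : N = 2 ^ j)
    (ρ ρ' : Fin 4) (l p : ℕ) (hl : l < N / 4) (hp : p < N / 4) :
    ip N (fun k => psi2 N r ρ (k - 4 * (l : ℤ))) (fun k => psi2 N r ρ' (k - 4 * (p : ℤ))) =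
      if ρ = ρ' ∧ l = p then 1 else 0 := by
  obtain ⟨M, hNM⟩ : 4 ∣ N := hN ▸ pow_dvd_pow 2 (by omega : 2 ≤ j)
  have hl' : l < M := by omega
  have hp' : p < M := by omega
  have hdvd : (M : ℤ) ∣ p - l ↔ l = p :=
    ⟨fun h => (Nat.modEq_iff_dvd.2 h).eq_of_lt_of_lt hl' hp', fun h => by simp [h]⟩
  simp only [ip_psi2_shift hNM (by omega), hdvd]

/-- Each second-level wavelet packet has norm one, its four-sample shifts are
mutually orthogonal, and shifts of packets with different indices are orthogonal:
⟨ψ₂,ρ[·−4l], ψ₂,ρ′[·−4p]⟩ = δ[ρ−ρ′]δ[l−p]. -/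
theorem stmt_3 (j r : ℕ) (hj : 3 ≤ j) (hr : 1 ≤ r) (N : ℕ) (hN : N = 2 ^ j)
    (ρ ρ' : Fin 4) (l p : ℕ) (hl : l < N / 4) (hp : p < N / 4) :
    ip N (fun k => psi2 N r ρ (k - 4 * (l : ℤ))) (fun k => psi2 N r ρ' (k - 4 * (p : ℤ))) =
      if ρ = ρ' ∧ l = p then 1 else 0 :=
  stmt_3_general j r hj N hN ρ ρ' l p hl hp
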